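/- Let A be a finite alphabet with |A| ≥ 2 and n ≥ 1, and let Q ⊆ nA^* be a joinless code. Then Q is a finite maximal product code if and only if Q can be reached from {(ε,...,ε)} by a finite sequence of coordinatewise restrictions. -/

import Mathlib

/-- A prefix code: no element is a strict prefix of another. -/
def PrefixCode {A : Type*} (P : Set (List A)) : Prop :=
  ∀ p ∈ P, ∀ q ∈ P, p <+: q → p = q

/-- Two `n`-tuples of strings have a join iff they are coordinatewise prefix-comparable. -/
def HasJoin {A : Type*} {n : ℕ} (u v : Fin n → List A) : Prop :=
  ∀ i, u i <+: v i ∨ v i <+: u i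

/-- A joinless code in `nA^*`. -/
def JoinlessCode {A : Type*} {n : ℕ} (S : Set (Fin n → List A)) : Prop :=
  ∀ u ∈ S, ∀ v ∈ S, u ≠ v → ¬ HasJoin u v

/-- A maximal joinless code in `nA^*`. -/
def MaxJoinlessCode {A : Type*} {n : ℕ} (S : Set (Fin n → List A)) : Prop :=
  JoinlessCode S ∧ ∀ T : Set (Fin n → List A), JoinlessCode T → S ⊆ T → S = T

/-- A product code in `nA^*`: a cartesian product of `n` prefix codes. -/
def IsProductCode {A : Type*} {n : ℕ} (S : Set (Fin n → List A)) : Prop :=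
  ∃ P : Fin n → Set (List A), (∀ i, PrefixCode (P i)) ∧
    S = {u | ∀ i, u i ∈ P i}

/-- The coordinatewise restriction of `S` at the string `u` in coordinate `i`. -/
def CoordRestr {A : Type*} {n : ℕ} (S : Set (Fin n → List A)) (i : Fin n) (u : List A) :
    Set (Fin n → List A) :=
  {t ∈ S | t i ≠ u} ∪
    {q | ∃ t ∈ S, t i = u ∧ ∃ a : A, q = Function.update t i (u ++ [a])}

/-- One coordinatewise restriction step (at a string that occurs in coordinate `i`). -/
def CoordStep {A : Type*} {n : ℕ} (S T : Set (Fin n → List A)) : Prop :=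
  ∃ i : Fin n, ∃ u : List A, (∃ t ∈ S, t i = u) ∧ T = CoordRestr S i u

/-!
A product `∏ Pᵢ` of prefix codes is a maximal joinless code exactly when every `Pᵢ` is a maximal
prefix code, i.e. every string is prefix-comparable with some codeword; and a coordinatewise
restriction of a product only replaces one factor `Pᵢ` by `Pᵢ \ {u} ∪ uA`. So both sides of the
equivalence say that `Q = ∏ Pᵢ` with every `Pᵢ` a finite maximal prefix code. Such a code is
reached from `{ε}` by restrictions: if `P ≠ {ε}` and `ua` is a longest word of `P`, then maximality
forces `uA ⊆ P`, and `P \ uA ∪ {u}` is again a finite maximal prefix code, with smaller total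
length, whose restriction at `u` is `P`.
-/

section

open Function Relation Set

variable {A : Type*}

/-- Equivalent, for prefix codes, to maximality among prefix codes. -/
def IsMaximalPrefixCode (P : Set (List A)) : Prop :=
  PrefixCode P ∧ ∀ s : List A, ∃ p ∈ P, p <+: s ∨ s <+: p

def oneLetterExtensions (u : List A) : Set (List A) := range fun a : A => u ++ [a]

def prefixRestr (P : Set (List A)) (u : List A) : Set (List A) :=
  P \ {u} ∪ oneLetterExtensions u

def prefixMerge (P : Set (List A)) (u : List A) : Set (List A) :=
  P \ oneLetterExtensions u ∪ {u}

def PrefixRestrStep (P Q : Set (List A)) : Prop := ∃ u ∈ P, Q = prefixRestr P u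

section PrefixCode

variable {P : Set (List A)} {u : List A}

lemma PrefixCode.eq_singleton_nil (hP : PrefixCode P) (h : [] ∈ P) : P = {[]} :=
  eq_singleton_iff_unique_mem.2 ⟨h, fun p hp => (hP [] h p hp List.nil_prefix).symm⟩

lemma PrefixCode.notMem_of_append_mem (hP : PrefixCode P) {a : A} (h : u ++ [a] ∈ P) :
    u ∉ P := fun hu => by
  simpa using hP u hu _ h (u.prefix_append [a])

lemma IsMaximalPrefixCode.nonempty (hP : IsMaximalPrefixCode P) : P.Nonempty :=
  let ⟨p, hp, _⟩ := hP.2 []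
  ⟨p, hp⟩

lemma isMaximalPrefixCode_singleton_nil : IsMaximalPrefixCode ({[]} : Set (List A)) :=
  ⟨fun _ hp _ hq _ => hp.trans hq.symm, fun _ => ⟨[], rfl, Or.inl List.nil_prefix⟩⟩

lemma Set.Finite.prefixRestr [Finite A] (hP : P.Finite) : (prefixRestr P u).Finite :=
  hP.sdiff.union (finite_range _)

lemma PrefixCode.prefixRestr (hP : PrefixCode P) (hu : u ∈ P) : PrefixCode (prefixRestr P u) := by
  rintro p (⟨hp, hpu⟩ | ⟨a, rfl⟩) q (⟨hq, hqu⟩ | ⟨b, rfl⟩) hpq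
  · exact hP p hp q hq hpq
  · rcases List.prefix_concat_iff.1 hpq with h | h
    · exact h
    · exact absurd (hP p hp u hu h) hpu
  · exact absurd (hP u hu q hq ((u.prefix_append [a]).trans hpq)).symm hqu
  · exact hpq.eq_of_length (by simp)

lemma IsMaximalPrefixCode.prefixRestr [Nonempty A] (hP : IsMaximalPrefixCode P) (hu : u ∈ P) :
    IsMaximalPrefixCode (prefixRestr P u) := by
  refine ⟨hP.1.prefixRestr hu, fun s => ?_⟩
  obtain ⟨p, hp, hps⟩ := hP.2 s
  by_cases hpu : p = u
  · subst hpu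
    obtain ⟨a⟩ := ‹Nonempty A›
    rcases hps with ⟨_ | ⟨b, r⟩, rfl⟩ | hsp
    · exact ⟨p ++ [a], Or.inr ⟨a, rfl⟩, Or.inr (by simp)⟩
    · exact ⟨p ++ [b], Or.inr ⟨b, rfl⟩, Or.inl ⟨r, by simp⟩⟩
    · exact ⟨p ++ [a], Or.inr ⟨a, rfl⟩, Or.inr (hsp.trans (p.prefix_append [a]))⟩
  · exact ⟨p, Or.inl ⟨hp, hpu⟩, hps⟩

lemma IsMaximalPrefixCode.oneLetterExtensions_subset (hP : IsMaximalPrefixCode P) {a : A}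
    (hw : u ++ [a] ∈ P) (hlen : ∀ p ∈ P, p.length ≤ u.length + 1) : oneLetterExtensions u ⊆ P := by
  rintro _ ⟨b, rfl⟩
  obtain ⟨p, hp, hpb | hbp⟩ := hP.2 (u ++ [b])
  · rcases List.prefix_concat_iff.1 hpb with rfl | hpu
    · exact hp
    · have := hP.1 p hp _ hw (hpu.trans (u.prefix_append [a]))
      simpa [this] using hpu.length_le
  · show u ++ [b] ∈ P
    rwa [hbp.eq_of_length (le_antisymm hbp.length_le (by simpa using hlen p hp))]

lemma PrefixCode.prefixMerge [Nonempty A] (hP : PrefixCode P) (hsub : oneLetterExtensions u ⊆ P)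
    (hlen : ∀ p ∈ P, p.length ≤ u.length + 1) : PrefixCode (prefixMerge P u) := by
  obtain ⟨a⟩ := ‹Nonempty A›
  rintro p (⟨hp, hpE⟩ | rfl) q (⟨hq, hqE⟩ | rfl) hpq
  · exact hP p hp q hq hpq
  · exact absurd (hP p hp _ (hsub ⟨a, rfl⟩) (hpq.trans (List.prefix_append _ _)) ▸ ⟨a, rfl⟩) hpE
  · obtain ⟨_ | ⟨b, _ | ⟨c, r⟩⟩, rfl⟩ := hpq
    · simp
    · exact absurd ⟨b, rfl⟩ hqE
    · simpa using hlen _ hq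
  · rfl

lemma IsMaximalPrefixCode.prefixMerge [Nonempty A] (hP : IsMaximalPrefixCode P)
    (hsub : oneLetterExtensions u ⊆ P) (hlen : ∀ p ∈ P, p.length ≤ u.length + 1) :
    IsMaximalPrefixCode (prefixMerge P u) := by
  refine ⟨hP.1.prefixMerge hsub hlen, fun s => ?_⟩
  obtain ⟨p, hp, hps⟩ := hP.2 s
  by_cases hpE : p ∈ oneLetterExtensions u
  · obtain ⟨b, rfl⟩ := hpE
    refine ⟨u, Or.inr rfl, ?_⟩
    rcases hps with hps | hsp
    · exact Or.inl ((u.prefix_append [b]).trans hps)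
    · rcases List.prefix_concat_iff.1 hsp with rfl | hsu
      · exact Or.inl (u.prefix_append [b])
      · exact Or.inr hsu
  · exact ⟨p, Or.inl ⟨hp, hpE⟩, hps⟩

lemma prefixRestr_prefixMerge (hsub : oneLetterExtensions u ⊆ P) (hu : u ∉ P) :
    prefixRestr (prefixMerge P u) u = P := by
  ext p
  by_cases hpE : p ∈ oneLetterExtensions u
  · simp [prefixRestr, prefixMerge, hpE, hsub hpE]
  · have : p ∈ P → p ≠ u := by rintro hp rfl; exact hu hp
    simp [prefixRestr, prefixMerge, hpE]
    tauto

lemma finsum_length_prefixMerge_lt [Nonempty A] (hP : P.Finite)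
    (hsub : oneLetterExtensions u ⊆ P) (hu : u ∉ P) :
    ∑ᶠ p ∈ prefixMerge P u, p.length < ∑ᶠ p ∈ P, p.length := by
  obtain ⟨a⟩ := ‹Nonempty A›
  have hE : ∑ᶠ p ∈ P, p.length =
      ∑ᶠ p ∈ oneLetterExtensions u, p.length + ∑ᶠ p ∈ P \ oneLetterExtensions u, p.length :=
    (finsum_mem_add_sdiff hsub hP).symm
  have hua : ∑ᶠ p ∈ oneLetterExtensions u, p.length =
      (u ++ [a]).length + ∑ᶠ p ∈ oneLetterExtensions u \ {u ++ [a]}, p.length := by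
    rw [← finsum_mem_singleton (f := List.length) (a := u ++ [a])]
    exact (finsum_mem_add_sdiff (singleton_subset_iff.2 (mem_range_self a)) (hP.subset hsub)).symm
  rw [prefixMerge, union_singleton, finsum_mem_insert _ (fun h => hu h.1) hP.sdiff, hE, hua]
  simp only [List.length_append, List.length_singleton]
  omega

theorem IsMaximalPrefixCode.reflTransGen_prefixRestrStep [Nonempty A]
    (hP : IsMaximalPrefixCode P) (hfin : P.Finite) : ReflTransGen PrefixRestrStep {[]} P := by
  induction h : ∑ᶠ p ∈ P, p.length using Nat.strong_induction_on generalizing P with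
  | _ N ih =>
  by_cases hnil : [] ∈ P
  · rw [hP.1.eq_singleton_nil hnil]
  obtain ⟨w, hw, hwmax⟩ := exists_max_image P List.length hfin hP.nonempty
  obtain ⟨u, a, rfl⟩ : ∃ u a, w = u ++ [a] :=
    (w.eq_nil_or_concat').resolve_left fun h => hnil (h ▸ hw)
  have hlen : ∀ p ∈ P, p.length ≤ u.length + 1 := by simpa using hwmax
  have hsub := hP.oneLetterExtensions_subset hw hlen
  have hu := hP.1.notMem_of_append_mem hw
  have hreach := ih _ (h ▸ finsum_length_prefixMerge_lt hfin hsub hu) (hP.prefixMerge hsub hlen)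
    (hfin.sdiff.union (finite_singleton u)) rfl
  exact hreach.tail ⟨u, Or.inr rfl, (prefixRestr_prefixMerge hsub hu).symm⟩

end PrefixCode

section Product

variable {n : ℕ}

lemma HasJoin.symm {u v : Fin n → List A} (h : HasJoin u v) : HasJoin v u :=
  fun i => (h i).symm

lemma hasJoin_refl (u : Fin n → List A) : HasJoin u u :=
  fun _ => Or.inl (List.prefix_refl _)

lemma MaxJoinlessCode.exists_hasJoin {S : Set (Fin n → List A)} (hS : MaxJoinlessCode S)
    (v : Fin n → List A) : ∃ u ∈ S, HasJoin v u := by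
  by_contra! hv
  have hjoinless : JoinlessCode (insert v S) := by
    rintro x (rfl | hx) y (rfl | hy) hxy
    · exact absurd rfl hxy
    · exact hv y hy
    · exact fun h => hv x hx h.symm
    · exact hS.1 x hx y hy hxy
  have hvS : v ∈ S := (hS.2 _ hjoinless (subset_insert v S)).symm ▸ mem_insert v S
  exact hv v hvS (hasJoin_refl v)

variable {P : Fin n → Set (List A)} {i : Fin n}

lemma isProductCode_iff {S : Set (Fin n → List A)} :
    IsProductCode S ↔ ∃ P : Fin n → Set (List A), (∀ i, PrefixCode (P i)) ∧ S = univ.pi P := by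
  simp only [IsProductCode, Set.pi, mem_univ, true_imp_iff]

lemma joinlessCode_univ_pi (hP : ∀ i, PrefixCode (P i)) : JoinlessCode (univ.pi P) := by
  intro u hu v hv huv hj
  refine huv (funext fun i => ?_)
  rcases hj i with h | h
  · exact hP i _ (hu i trivial) _ (hv i trivial) h
  · exact (hP i _ (hv i trivial) _ (hu i trivial) h).symm

lemma maxJoinlessCode_univ_pi (hP : ∀ i, IsMaximalPrefixCode (P i)) :
    MaxJoinlessCode (univ.pi P) := by
  refine ⟨joinlessCode_univ_pi fun i => (hP i).1, fun T hT hsub => hsub.antisymm fun v hv => ?_⟩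
  choose p hp hpv using fun i => (hP i).2 (v i)
  by_cases hpv' : p = v
  · exact hpv' ▸ fun i _ => hp i
  · exact absurd hpv (hT p (hsub fun i _ => hp i) v hv hpv')

lemma MaxJoinlessCode.isMaximalPrefixCode_of_univ_pi (hmax : MaxJoinlessCode (univ.pi P))
    (hP : PrefixCode (P i)) : IsMaximalPrefixCode (P i) := by
  refine ⟨hP, fun s => ?_⟩
  obtain ⟨u, hu, hsu⟩ := hmax.exists_hasJoin fun _ => s
  exact ⟨u i, hu i trivial, (hsu i).symm⟩

lemma mem_univ_pi_update_iff {X : Set (List A)} {t : Fin n → List A} :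
    t ∈ univ.pi (update P i X) ↔ t i ∈ X ∧ ∀ j ≠ i, t j ∈ P j := by
  simp only [mem_univ_pi]
  exact forall_update_iff P (p := fun j s => t j ∈ s)

lemma mem_univ_pi_iff_of_ne (i : Fin n) {t : Fin n → List A} :
    t ∈ univ.pi P ↔ t i ∈ P i ∧ ∀ j ≠ i, t j ∈ P j := by
  conv_lhs => rw [← update_eq_self i P]
  exact mem_univ_pi_update_iff

lemma coordRestr_univ_pi {u : List A} (hu : u ∈ P i) :
    CoordRestr (univ.pi P) i u = univ.pi (update P i (prefixRestr (P i) u)) := by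
  ext t
  rw [mem_univ_pi_update_iff]
  constructor
  · rintro (⟨ht, hne⟩ | ⟨s, hs, -, a, rfl⟩)
    · exact ⟨Or.inl ⟨ht i trivial, hne⟩, fun j _ => ht j trivial⟩
    · exact ⟨Or.inr ⟨a, by simp⟩, fun j hj => by simpa [hj] using hs j trivial⟩
  · rintro ⟨⟨hti, hne⟩ | ⟨a, hta⟩, hj⟩
    · exact Or.inl ⟨(mem_univ_pi_iff_of_ne i).2 ⟨hti, hj⟩, hne⟩
    · refine Or.inr ⟨update t i u, (mem_univ_pi_iff_of_ne i).2 ⟨by simpa, fun j hj' => by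
        simpa [hj'] using hj j hj'⟩, update_self .., a, ?_⟩
      rw [update_idem, show u ++ [a] = t i from hta, update_eq_self]

lemma coordStep_univ_pi_update (hne : ∀ j, (P j).Nonempty) {X Y : Set (List A)}
    (h : PrefixRestrStep X Y) : CoordStep (univ.pi (update P i X)) (univ.pi (update P i Y)) := by
  obtain ⟨u, hu, rfl⟩ := h
  choose c hc using hne
  refine ⟨i, u, ⟨update c i u, mem_univ_pi_update_iff.2 ⟨by simpa, fun j hj => by
    simpa [hj] using hc j⟩, update_self ..⟩, ?_⟩
  rw [coordRestr_univ_pi (by simpa using hu), update_idem, update_self]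

theorem reflTransGen_coordStep_univ_pi [Nonempty A]
    (hP : ∀ i, (P i).Finite ∧ IsMaximalPrefixCode (P i)) :
    ReflTransGen CoordStep {fun _ => []} (univ.pi P) := by
  classical
  suffices ∀ s : Finset (Fin n),
      ReflTransGen CoordStep {fun _ => []} (univ.pi (s.piecewise P fun _ => {[]})) by
    simpa using this Finset.univ
  intro s
  induction s using Finset.induction_on with
  | empty =>
    rw [Finset.piecewise_empty, show (univ.pi fun _ : Fin n => ({[]} : Set (List A))) =
      {fun _ => []} from univ_pi_singleton _]
  | insert i s hi ih =>
    set F := s.piecewise P fun _ => {[]}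
    have hne : ∀ j, (F j).Nonempty := fun j => by
      by_cases hj : j ∈ s
      · simpa [F, hj] using (hP j).2.nonempty
      · simp [F, hj]
    have hstep : ReflTransGen CoordStep (univ.pi (update F i {[]})) (univ.pi (update F i (P i))) :=
      ((hP i).2.reflTransGen_prefixRestrStep (hP i).1).lift
        (fun X => univ.pi (update F i X)) fun X Y h => coordStep_univ_pi_update hne h
    rw [Finset.piecewise_insert]
    rw [update_eq_self_iff.2 (s.piecewise_eq_of_notMem _ _ hi).symm] at hstep
    exact ih.trans hstep

theorem exists_univ_pi_of_reflTransGen_coordStep [Finite A] [Nonempty A]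
    {Q : Set (Fin n → List A)} (h : ReflTransGen CoordStep {fun _ => []} Q) :
    ∃ P : Fin n → Set (List A), (∀ i, (P i).Finite ∧ IsMaximalPrefixCode (P i)) ∧
      Q = univ.pi P := by
  induction h with
  | refl => exact ⟨fun _ => {[]}, fun _ => ⟨finite_singleton _, isMaximalPrefixCode_singleton_nil⟩,
      (univ_pi_singleton _).symm⟩
  | tail _ step ih =>
    obtain ⟨P, hP, rfl⟩ := ih
    obtain ⟨i, _, ⟨t, ht, rfl⟩, rfl⟩ := step
    have hu : t i ∈ P i := ht i trivial
    refine ⟨update P i (prefixRestr (P i) (t i)), fun j => ?_, coordRestr_univ_pi hu⟩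
    rcases eq_or_ne j i with rfl | hj
    · rw [update_self]
      exact ⟨(hP j).1.prefixRestr, (hP j).2.prefixRestr hu⟩
    · rw [update_of_ne hj]
      exact hP j

theorem reflTransGen_coordStep_iff [Finite A] [Nonempty A] {Q : Set (Fin n → List A)} :
    ReflTransGen CoordStep {fun _ => []} Q ↔
      ∃ P : Fin n → Set (List A), (∀ i, (P i).Finite ∧ IsMaximalPrefixCode (P i)) ∧
        Q = univ.pi P :=
  ⟨exists_univ_pi_of_reflTransGen_coordStep, fun ⟨_, hP, hQ⟩ =>
    hQ ▸ reflTransGen_coordStep_univ_pi hP⟩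

theorem finite_isProductCode_maxJoinlessCode_iff {Q : Set (Fin n → List A)} :
    (Q.Finite ∧ IsProductCode Q ∧ MaxJoinlessCode Q) ↔
      ∃ P : Fin n → Set (List A), (∀ i, (P i).Finite ∧ IsMaximalPrefixCode (P i)) ∧
        Q = univ.pi P := by
  rw [isProductCode_iff]
  constructor
  · rintro ⟨hfin, ⟨P, hP, rfl⟩, hmax⟩
    have hmaxP i : IsMaximalPrefixCode (P i) := hmax.isMaximalPrefixCode_of_univ_pi (hP i)
    have hne : (univ.pi P).Nonempty := univ_pi_nonempty_iff.2 fun i => (hmaxP i).nonempty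
    exact ⟨P, fun i => ⟨(hfin.image (eval i)).subset (subset_eval_image_pi hne i), hmaxP i⟩, rfl⟩
  · rintro ⟨P, hP, rfl⟩
    exact ⟨Finite.pi fun i => (hP i).1, ⟨P, fun i => (hP i).2.1, rfl⟩,
      maxJoinlessCode_univ_pi fun i => (hP i).2⟩

end Product

end

theorem stmt_11_general {A : Type*} [Fintype A] (hA : 2 ≤ Fintype.card A)
    {n : ℕ} (Q : Set (Fin n → List A)) :
    (Q.Finite ∧ IsProductCode Q ∧ MaxJoinlessCode Q) ↔
      Relation.ReflTransGen CoordStep {fun _ => ([] : List A)} Q := by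
  have : Nonempty A := Fintype.card_pos_iff.mp (by omega)
  rw [finite_isProductCode_maxJoinlessCode_iff, reflTransGen_coordStep_iff]

/-- A joinless code `Q ⊆ nA^*` is a finite maximal product code iff it can be reached
from the tuple of empty strings by a finite sequence of coordinatewise restrictions. -/
theorem stmt_11 {A : Type*} [Fintype A] (hA : 2 ≤ Fintype.card A)
    {n : ℕ} (hn : 1 ≤ n) (Q : Set (Fin n → List A)) (hQ : JoinlessCode Q) :
    (Q.Finite ∧ IsProductCode Q ∧ MaxJoinlessCode Q) ↔
      Relation.ReflTransGen CoordStep {fun _ => ([] : List A)} Q :=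
  stmt_11_general hA Q
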